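/- arXiv:1810.12997 — 3 statements merged into one kernel-verified Lean document; each statement's English description precedes it below -/
import Mathlib

section
/- (Online gradient descent regret, Zinkevich) Let F ⊆ ℝ^n be nonempty, closed, convex with diam_2(F) ≤ D, let g_1, …, g_T ∈ ℝ^n with ‖g_t‖_2 ≤ G for all t, and define x_1 ∈ F arbitrary and x_{t+1} = P_F(x_t − η·g_t) with constant step size η = D/(G√T), where P_F is the Euclidean projection onto F. Then for every x* ∈ F, Σ_{t=1}^T ⟨g_t, x_t − x*⟩ ≤ D·G·√T. -/
open Finset Real
open scoped RealInnerProductSpace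

/-!
Projection onto a convex set moves a point closer to every point of the set, so each step of
projected gradient descent satisfies
`‖x (t+1) - x*‖² ≤ ‖x t - x*‖² - 2η ⟪g t, x t - x*⟫ + η² ‖g t‖²`.
Summing, the distances telescope and `2η · regret ≤ D² + η² T G²`; the step size
`η = D / (G √T)` makes the two terms equal.
-/

section OnlineGradientDescent

variable {E : Type*} [NormedAddCommGroup E] [InnerProductSpace ℝ E]

theorem real_inner_sub_le_zero_of_nearest {K : Set E} (hK : Convex ℝ K) {y p : E} (hp : p ∈ K)
    (hnear : ∀ z ∈ K, ‖y - p‖ ≤ ‖y - z‖) : ∀ z ∈ K, ⟪y - p, z - p⟫ ≤ 0 := by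
  refine (norm_eq_iInf_iff_real_inner_le_zero hK hp).mp (le_antisymm ?_ ?_)
  · have : Nonempty K := ⟨⟨p, hp⟩⟩
    exact le_ciInf fun z => hnear z z.2
  · exact ciInf_le ⟨0, by rintro _ ⟨z, rfl⟩; exact norm_nonneg (y - z)⟩ (⟨p, hp⟩ : K)

theorem norm_sub_le_of_nearest {K : Set E} (hK : Convex ℝ K) {y p : E} (hp : p ∈ K)
    (hnear : ∀ z ∈ K, ‖y - p‖ ≤ ‖y - z‖) {z : E} (hz : z ∈ K) : ‖p - z‖ ≤ ‖y - z‖ := by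
  have hobtuse : 0 ≤ ⟪y - p, p - z⟫ := by
    have := real_inner_sub_le_zero_of_nearest hK hp hnear z hz
    rw [← neg_sub p z, inner_neg_right] at this
    linarith
  have hsplit : ‖y - z‖ ^ 2 = ‖y - p‖ ^ 2 + 2 * ⟪y - p, p - z⟫ + ‖p - z‖ ^ 2 := by
    rw [← norm_add_sq_real, sub_add_sub_cancel]
  refine (sq_le_sq₀ (norm_nonneg _) (norm_nonneg _)).mp ?_
  nlinarith [sq_nonneg ‖y - p‖]

theorem two_mul_real_inner_le_of_norm_le_norm_sub_smul {x x' g z : E} {η : ℝ}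
    (h : ‖x' - z‖ ≤ ‖x - η • g - z‖) :
    2 * η * ⟪g, x - z⟫ ≤ ‖x - z‖ ^ 2 - ‖x' - z‖ ^ 2 + η ^ 2 * ‖g‖ ^ 2 := by
  have hexpand : ‖x - η • g - z‖ ^ 2 = ‖x - z‖ ^ 2 - 2 * η * ⟪g, x - z⟫ + η ^ 2 * ‖g‖ ^ 2 := by
    rw [sub_right_comm, norm_sub_sq_real, real_inner_smul_right, norm_smul, mul_pow,
      Real.norm_eq_abs, sq_abs, real_inner_comm]
    ring
  nlinarith [pow_le_pow_left₀ (norm_nonneg _) h 2]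

theorem two_mul_sum_real_inner_le {T : ℕ} (x : ℕ → E) (g : Fin T → E) (η : ℝ) (z : E)
    (hstep : ∀ t : Fin T, ‖x (t + 1) - z‖ ≤ ‖x t - η • g t - z‖) :
    2 * η * (∑ t : Fin T, ⟪g t, x t - z⟫) ≤ ‖x 0 - z‖ ^ 2 + η ^ 2 * ∑ t : Fin T, ‖g t‖ ^ 2 := by
  set a : ℕ → ℝ := fun k => ‖x k - z‖ ^ 2
  have htelescope : ∑ t : Fin T, (a t - a (t + 1)) = a 0 - a T := by
    rw [Fin.sum_univ_eq_sum_range (fun i => a i - a (i + 1)), sum_range_sub']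
  calc 2 * η * (∑ t : Fin T, ⟪g t, x t - z⟫)
      = ∑ t : Fin T, 2 * η * ⟪g t, x t - z⟫ := mul_sum _ _ _
    _ ≤ ∑ t : Fin T, (a t - a (t + 1) + η ^ 2 * ‖g t‖ ^ 2) :=
        sum_le_sum fun t _ => two_mul_real_inner_le_of_norm_le_norm_sub_smul (hstep t)
    _ = a 0 - a T + η ^ 2 * (∑ t : Fin T, ‖g t‖ ^ 2) := by
        rw [sum_add_distrib, htelescope, mul_sum]
    _ ≤ a 0 + η ^ 2 * ∑ t : Fin T, ‖g t‖ ^ 2 := by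
        have : 0 ≤ a T := sq_nonneg _
        linarith

end OnlineGradientDescent

theorem stmt_10_general (n T : ℕ) (hT : 1 ≤ T) (D G : ℝ) (hD : 0 < D) (hG : 0 < G)
    (F : Set (EuclideanSpace ℝ (Fin n)))
    (hFconv : Convex ℝ F)
    (hFdiam : ∀ a ∈ F, ∀ b ∈ F, ‖a - b‖ ≤ D)
    (g : Fin T → EuclideanSpace ℝ (Fin n)) (hg : ∀ t, ‖g t‖ ≤ G)
    (P : EuclideanSpace ℝ (Fin n) → EuclideanSpace ℝ (Fin n))
    (hP : ∀ y, P y ∈ F ∧ ∀ z ∈ F, ‖y - P y‖ ≤ ‖y - z‖)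
    (η : ℝ) (hη : η = D / (G * Real.sqrt T))
    (x : ℕ → EuclideanSpace ℝ (Fin n)) (hx0 : x 0 ∈ F)
    (hstep : ∀ t : Fin T, x (t + 1) = P (x t - η • g t)) :
    ∀ xstar ∈ F,
      ∑ t : Fin T, (inner ℝ (g t) (x t - xstar) : ℝ) ≤ D * G * Real.sqrt T := by
  intro xstar hxstar
  have hsqrt : 0 < √(T : ℝ) := Real.sqrt_pos.mpr (by exact_mod_cast hT)
  have hη0 : 0 < η := hη ▸ by positivity
  have hregret := two_mul_sum_real_inner_le x g η xstar fun t =>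
    hstep t ▸ norm_sub_le_of_nearest hFconv (hP _).1 (hP _).2 hxstar
  have hinit : ‖x 0 - xstar‖ ^ 2 ≤ D ^ 2 :=
    pow_le_pow_left₀ (norm_nonneg _) (hFdiam _ hx0 _ hxstar) 2
  have hgrad : ∑ t : Fin T, ‖g t‖ ^ 2 ≤ T * G ^ 2 := by
    simpa using sum_le_sum fun t (_ : t ∈ univ) => pow_le_pow_left₀ (norm_nonneg _) (hg t) 2
  have hbalance : D ^ 2 + η ^ 2 * (T * G ^ 2) = 2 * η * (D * G * √T) := by
    rw [hη]
    field_simp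
    rw [Real.sq_sqrt (Nat.cast_nonneg T)]
    ring
  have hgrad' := mul_le_mul_of_nonneg_left hgrad (sq_nonneg η)
  exact le_of_mul_le_mul_left (by linarith) (by positivity : 0 < 2 * η)

theorem stmt_10 (n T : ℕ) (hT : 1 ≤ T) (D G : ℝ) (hD : 0 < D) (hG : 0 < G)
    (F : Set (EuclideanSpace ℝ (Fin n))) (hFne : F.Nonempty)
    (hFclosed : IsClosed F) (hFconv : Convex ℝ F)
    (hFdiam : ∀ a ∈ F, ∀ b ∈ F, ‖a - b‖ ≤ D)
    (g : Fin T → EuclideanSpace ℝ (Fin n)) (hg : ∀ t, ‖g t‖ ≤ G)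
    (P : EuclideanSpace ℝ (Fin n) → EuclideanSpace ℝ (Fin n))
    (hP : ∀ y, P y ∈ F ∧ ∀ z ∈ F, ‖y - P y‖ ≤ ‖y - z‖)
    (η : ℝ) (hη : η = D / (G * Real.sqrt T))
    (x : ℕ → EuclideanSpace ℝ (Fin n)) (hx0 : x 0 ∈ F)
    (hstep : ∀ t : Fin T, x (t + 1) = P (x t - η • g t)) :
    ∀ xstar ∈ F,
      ∑ t : Fin T, (inner ℝ (g t) (x t - xstar) : ℝ) ≤ D * G * Real.sqrt T :=
  stmt_10_general n T hT D G hD hG F hFconv hFdiam g hg P hP η hη x hx0 hstep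
end

section
/- (OGD with dynamic step size) Under the same setup with step sizes η_t = D/(G√t), the iterates of projected online gradient descent satisfy Σ_{t=1}^T ⟨g_t, x_t − x*⟩ ≤ (3/2)·D·G·√T for every x* ∈ F. -/
/-!
The projection onto a convex set is nonexpansive towards points of the set, so each step satisfies
`2 η_t ⟪g_t, x_t - x⋆⟫ ≤ ‖x_t - x⋆‖² - ‖x_{t+1} - x⋆‖² + η_t² ‖g_t‖²`. Dividing by `2 η_t` and
summing, the distance terms are summed by parts against the nondecreasing weights
`1 / (2 η_t) = G √(t+1) / (2D)`; since all iterates lie in `F`, they contribute at most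
`D² G √T / (2D) = D G √T / 2`. The gradient terms contribute `(D G / 2) ∑_{t<T} 1/√(t+1) ≤ D G √T`.
-/

open Finset Real RealInnerProductSpace

section

variable {E : Type*} [NormedAddCommGroup E] [InnerProductSpace ℝ E] {K : Set E} {y p z : E}

theorem Convex.real_inner_sub_le_zero_of_forall_norm_sub_le (hK : Convex ℝ K) (hp : p ∈ K)
    (hmin : ∀ w ∈ K, ‖y - p‖ ≤ ‖y - w‖) (hz : z ∈ K) : ⟪y - p, z - p⟫ ≤ 0 := by
  have : Nonempty K := ⟨⟨p, hp⟩⟩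
  have hbdd : BddBelow (Set.range fun w : K => ‖y - w‖) :=
    ⟨0, by rintro _ ⟨w, rfl⟩; exact norm_nonneg _⟩
  refine (norm_eq_iInf_iff_real_inner_le_zero hK hp).mp ?_ z hz
  exact le_antisymm (le_ciInf fun w => hmin w w.2) (ciInf_le hbdd ⟨p, hp⟩)

theorem Convex.norm_sub_le_of_forall_norm_sub_le (hK : Convex ℝ K) (hp : p ∈ K)
    (hmin : ∀ w ∈ K, ‖y - p‖ ≤ ‖y - w‖) (hz : z ∈ K) : ‖p - z‖ ≤ ‖y - z‖ := by
  have hinner := hK.real_inner_sub_le_zero_of_forall_norm_sub_le hp hmin hz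
  have hexpand : ‖y - z‖ ^ 2 = ‖y - p‖ ^ 2 - 2 * ⟪y - p, z - p⟫ + ‖p - z‖ ^ 2 := by
    rw [show y - z = (y - p) - (z - p) by abel, norm_sub_sq_real, norm_sub_rev z p]
  exact (sq_le_sq₀ (norm_nonneg _) (norm_nonneg _)).mp (by nlinarith [sq_nonneg ‖y - p‖])

theorem real_inner_le_of_norm_sub_le_norm_sub_smul {x x' g : E} {η : ℝ} (hη : 0 < η)
    (h : ‖x' - z‖ ≤ ‖x - η • g - z‖) :
    ⟪g, x - z⟫ ≤ (‖x - z‖ ^ 2 - ‖x' - z‖ ^ 2) / (2 * η) + η / 2 * ‖g‖ ^ 2 := by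
  have hexpand : ‖x - η • g - z‖ ^ 2 = ‖x - z‖ ^ 2 - 2 * η * ⟪g, x - z⟫ + η ^ 2 * ‖g‖ ^ 2 := by
    rw [show x - η • g - z = (x - z) - η • g by abel, norm_sub_sq_real, real_inner_smul_right,
      norm_smul, Real.norm_of_nonneg hη.le, real_inner_comm]
    ring
  have hsq := pow_le_pow_left₀ (norm_nonneg _) h 2
  rw [← sub_le_iff_le_add, le_div_iff₀ (by positivity)]
  nlinarith

theorem real_inner_le_of_norm_sub_le_norm_sub_div_mul_smul {x x' g : E} {D G s : ℝ} (hD : 0 < D)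
    (hG : 0 < G) (hs : 0 < s) (hg : ‖g‖ ≤ G) (h : ‖x' - z‖ ≤ ‖x - (D / (G * s)) • g - z‖) :
    ⟪g, x - z⟫ ≤ G * s / (2 * D) * (‖x - z‖ ^ 2 - ‖x' - z‖ ^ 2) + D * G / 2 * (1 / s) := by
  have hg2 : ‖g‖ ^ 2 ≤ G ^ 2 := pow_le_pow_left₀ (norm_nonneg _) hg 2
  calc ⟪g, x - z⟫
      ≤ (‖x - z‖ ^ 2 - ‖x' - z‖ ^ 2) / (2 * (D / (G * s))) + D / (G * s) / 2 * ‖g‖ ^ 2 :=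
        real_inner_le_of_norm_sub_le_norm_sub_smul (by positivity) h
    _ ≤ (‖x - z‖ ^ 2 - ‖x' - z‖ ^ 2) / (2 * (D / (G * s))) + D / (G * s) / 2 * G ^ 2 := by
        gcongr
    _ = G * s / (2 * D) * (‖x - z‖ ^ 2 - ‖x' - z‖ ^ 2) + D * G / 2 * (1 / s) := by
        field_simp

end

theorem sum_range_mul_sub_succ_le {a b : ℕ → ℝ} {C : ℝ} (hb : Monotone b) (hb0 : 0 ≤ b 0)
    {T : ℕ} (ha : ∀ t ≤ T, a t ≤ C) :
    ∑ t ∈ range T, b (t + 1) * (a t - a (t + 1)) ≤ b T * (C - a T) := by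
  induction T with
  | zero => simpa using mul_nonneg hb0 (sub_nonneg.2 (ha 0 le_rfl))
  | succ T ih =>
    rw [sum_range_succ]
    have hprev := ih fun t ht => ha t (by omega)
    have hmono := mul_le_mul_of_nonneg_right (hb T.le_succ) (sub_nonneg.2 (ha T (by omega)))
    linarith

theorem one_div_sqrt_add_one_le {x : ℝ} (hx : 0 ≤ x) : 1 / √(x + 1) ≤ 2 * (√(x + 1) - √x) := by
  have hs : 0 < √(x + 1) := sqrt_pos.2 (by linarith)
  have hs2 : √(x + 1) ^ 2 = x + 1 := sq_sqrt (by linarith)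
  have hr2 : √x ^ 2 = x := sq_sqrt hx
  rw [div_le_iff₀ hs]
  nlinarith [sq_nonneg (√(x + 1) - √x)]

theorem sum_range_one_div_sqrt_succ_le (T : ℕ) : ∑ t ∈ range T, 1 / √((t : ℝ) + 1) ≤ 2 * √T :=
  calc ∑ t ∈ range T, 1 / √((t : ℝ) + 1)
      ≤ ∑ t ∈ range T, 2 * (√((t + 1 : ℕ) : ℝ) - √(t : ℝ)) :=
        sum_le_sum fun t _ => by exact_mod_cast one_div_sqrt_add_one_le t.cast_nonneg
    _ = 2 * √T := by rw [← mul_sum, sum_range_sub (fun t : ℕ => √(t : ℝ))]; simp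

theorem stmt_11_general (n T : ℕ) (D G : ℝ) (hD : 0 < D) (hG : 0 < G)
    (F : Set (EuclideanSpace ℝ (Fin n))) (hFconv : Convex ℝ F)
    (hFdiam : ∀ a ∈ F, ∀ b ∈ F, ‖a - b‖ ≤ D)
    (g : Fin T → EuclideanSpace ℝ (Fin n)) (hg : ∀ t, ‖g t‖ ≤ G)
    (P : EuclideanSpace ℝ (Fin n) → EuclideanSpace ℝ (Fin n))
    (hP : ∀ y, P y ∈ F ∧ ∀ z ∈ F, ‖y - P y‖ ≤ ‖y - z‖)
    (η : ℕ → ℝ) (hη : ∀ t : ℕ, η t = D / (G * Real.sqrt (t + 1)))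
    (x : ℕ → EuclideanSpace ℝ (Fin n)) (hx0 : x 0 ∈ F)
    (hstep : ∀ t : Fin T, x (t + 1) = P (x t - η t • g t)) :
    ∀ xstar ∈ F,
      ∑ t : Fin T, (inner ℝ (g t) (x t - xstar) : ℝ) ≤ 3 / 2 * D * G * Real.sqrt T := by
  intro xstar hxstar
  have hmem : ∀ t ≤ T, x t ∈ F := by
    rintro (_ | t) ht
    · exact hx0
    · rw [hstep ⟨t, by omega⟩]; exact (hP _).1
  set a : ℕ → ℝ := fun t => ‖x t - xstar‖ ^ 2
  set b : ℕ → ℝ := fun s => G * √s / (2 * D)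
  have hb : Monotone b := fun s s' hss' => by simp only [b]; gcongr
  have hstep_le (t : Fin T) : ⟪g t, x t - xstar⟫
      ≤ b (t + 1) * (a t - a (t + 1)) + D * G / 2 * (1 / √((t : ℝ) + 1)) := by
    have hproj := hFconv.norm_sub_le_of_forall_norm_sub_le (hP (x t - η t • g t)).1
      (hP _).2 hxstar
    rw [← hstep t, hη] at hproj
    simp only [a, b]
    push_cast
    exact real_inner_le_of_norm_sub_le_norm_sub_div_mul_smul hD hG (by positivity) (hg t) hproj
  have hdist : ∀ t ≤ T, a t ≤ D ^ 2 := fun t ht =>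
    pow_le_pow_left₀ (norm_nonneg _) (hFdiam _ (hmem t ht) _ hxstar) 2
  have hbT : b T * D ^ 2 = D * G * √T / 2 := by simp only [b]; field_simp
  have haT : 0 ≤ b T * a T := by positivity
  calc ∑ t : Fin T, ⟪g t, x t - xstar⟫
      ≤ ∑ t ∈ range T, (b (t + 1) * (a t - a (t + 1)) + D * G / 2 * (1 / √((t : ℝ) + 1))) := by
        rw [← Fin.sum_univ_eq_sum_range]
        exact sum_le_sum fun t _ => hstep_le t
    _ = ∑ t ∈ range T, b (t + 1) * (a t - a (t + 1))
          + D * G / 2 * ∑ t ∈ range T, 1 / √((t : ℝ) + 1) := by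
        rw [sum_add_distrib, mul_sum]
    _ ≤ b T * (D ^ 2 - a T) + D * G / 2 * (2 * √T) := by
        gcongr
        · exact sum_range_mul_sub_succ_le hb (by simp [b]) hdist
        · exact sum_range_one_div_sqrt_succ_le T
    _ ≤ 3 / 2 * D * G * √T := by linarith

theorem stmt_11 (n T : ℕ) (hT : 1 ≤ T) (D G : ℝ) (hD : 0 < D) (hG : 0 < G)
    (F : Set (EuclideanSpace ℝ (Fin n))) (hFne : F.Nonempty)
    (hFclosed : IsClosed F) (hFconv : Convex ℝ F)
    (hFdiam : ∀ a ∈ F, ∀ b ∈ F, ‖a - b‖ ≤ D)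
    (g : Fin T → EuclideanSpace ℝ (Fin n)) (hg : ∀ t, ‖g t‖ ≤ G)
    (P : EuclideanSpace ℝ (Fin n) → EuclideanSpace ℝ (Fin n))
    (hP : ∀ y, P y ∈ F ∧ ∀ z ∈ F, ‖y - P y‖ ≤ ‖y - z‖)
    (η : ℕ → ℝ) (hη : ∀ t : ℕ, η t = D / (G * Real.sqrt (t + 1)))
    (x : ℕ → EuclideanSpace ℝ (Fin n)) (hx0 : x 0 ∈ F)
    (hstep : ∀ t : Fin T, x (t + 1) = P (x t - η t • g t)) :
    ∀ xstar ∈ F,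
      ∑ t : Fin T, (inner ℝ (g t) (x t - xstar) : ℝ) ≤ 3 / 2 * D * G * Real.sqrt T :=
  stmt_11_general n T D G hD hG F hFconv hFdiam g hg P hP η hη x hx0 hstep
end

section
/- (Learning from (1−ε)-optimal observations) Suppose 0 ≤ ε ≤ 1, and for t = 1,…,T: x_t maximizes ⟨c_true, ·⟩ over X_t, x̃_t ∈ X_t satisfies ⟨c_true, x̃_t⟩ ≥ (1−ε)·⟨c_true, x_t⟩, and x̄_t maximizes ⟨c_t, ·⟩ over X_t. If (1/T)·Σ_{t=1}^T ⟨c_t − c_true, x̄_t − x̃_t⟩ ≤ B and ⟨c_t, x̄_t − x̃_t⟩ ≥ 0 for all t, then (1/T)·Σ_{t=1}^T ⟨c_true, x̄_t⟩ ≥ (1−ε)·(1/T)·Σ_{t=1}^T ⟨c_true, x_t⟩ − B. -/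
open Matrix Finset

theorem stmt_12 (n T : ℕ) (hT : 1 ≤ T) (ε B : ℝ) (hε0 : 0 ≤ ε) (hε1 : ε ≤ 1)
    (hB : 0 ≤ B)
    (X : Fin T → Set (Fin n → ℝ)) (hX : ∀ t, (X t).Nonempty)
    (c : Fin T → Fin n → ℝ) (ctrue : Fin n → ℝ)
    (x xtilde xbar : Fin T → Fin n → ℝ)
    (hxX : ∀ t, x t ∈ X t) (hxtX : ∀ t, xtilde t ∈ X t) (hxbX : ∀ t, xbar t ∈ X t)
    (hxopt : ∀ t, ∀ z ∈ X t, ctrue ⬝ᵥ z ≤ ctrue ⬝ᵥ x t)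
    (hxtilde : ∀ t, (1 - ε) * (ctrue ⬝ᵥ x t) ≤ ctrue ⬝ᵥ xtilde t)
    (hxbaropt : ∀ t, ∀ z ∈ X t, c t ⬝ᵥ z ≤ c t ⬝ᵥ xbar t)
    (hregret : (1 / (T : ℝ)) * ∑ t, (c t - ctrue) ⬝ᵥ (xbar t - xtilde t) ≤ B)
    (hnneg : ∀ t, 0 ≤ c t ⬝ᵥ (xbar t - xtilde t)) :
    (1 - ε) * ((1 / (T : ℝ)) * ∑ t, ctrue ⬝ᵥ x t) - B
      ≤ (1 / (T : ℝ)) * ∑ t, ctrue ⬝ᵥ xbar t := by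
  have hTpos : (0:ℝ) < T := by exact_mod_cast hT
  have h1 : ∀ t, (1 - ε) * (ctrue ⬝ᵥ x t) - (c t - ctrue) ⬝ᵥ (xbar t - xtilde t)
      ≤ ctrue ⬝ᵥ xbar t := by
    intro t
    have h2 := hxtilde t
    have h3 := hnneg t
    simp only [sub_dotProduct, dotProduct_sub] at *
    linarith
  have hsum : ∑ t, ((1 - ε) * (ctrue ⬝ᵥ x t) - (c t - ctrue) ⬝ᵥ (xbar t - xtilde t))
      ≤ ∑ t, ctrue ⬝ᵥ xbar t := Finset.sum_le_sum (fun t _ => h1 t)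
  rw [Finset.sum_sub_distrib, ← Finset.mul_sum] at hsum
  have hinv : (0:ℝ) < 1 / T := by positivity
  nlinarith [mul_le_mul_of_nonneg_left hsum (le_of_lt hinv)]
end
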